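/- arXiv:2308.15714 — 2 statements merged into one kernel-verified Lean document; each statement's English description precedes it below -/
import Mathlib

section
/- Let p ≥ 2 be even and G=(V,E) a (p,2)-flex-connected graph with unsafe edge set U. If A and B are crossing (p,3)-violated sets and |δ(A\B)| = p, then |δ(A∩B)| = |δ(A∪B)| = p+2, the cut δ(A\B) contains no unsafe edges, every unsafe edge of δ(A) lies in δ(A∩B), every unsafe edge of δ(B) lies in δ(A∪B), and consequently both A∩B and A∪B are (p,3)-violated. -/
/-!
The unsafe edges of `δ(A \ B)` are at most `|δ(A \ B)| - p`, so `|δ(A \ B)| = p` forces `δ(A \ B)`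
to be safe. Every edge of `δ(A)` outside `δ(A \ B)` lies in `δ(A ∩ B)`, and every edge of `δ(B)`
outside `δ(A \ B)` lies in `δ(A ∪ B)`; hence both `A ∩ B` and `A ∪ B` inherit at least three unsafe
cut edges. Removing two of them shows `|δ(A ∩ B)|, |δ(A ∪ B)| ≥ p + 2`, and submodularity of the
cut function against `|δ(A)| + |δ(B)| = 2p + 4` turns both bounds into equalities.
-/

open Finset

variable {V E : Type}

/-- The cut of a vertex set `S`: edges with exactly one endpoint in `S`. -/
def cutOf [Fintype E] [DecidableEq V] (ends : E → V × V) (S : Finset V) : Finset E :=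
  Finset.univ.filter (fun e => Xor ((ends e).1 ∈ S) ((ends e).2 ∈ S))

/-- Edges with one endpoint in `X` and the other in `Y`. -/
def btw [Fintype E] [DecidableEq V] (ends : E → V × V) (X Y : Finset V) : Finset E :=
  Finset.univ.filter (fun e =>
    ((ends e).1 ∈ X ∧ (ends e).2 ∈ Y) ∨ ((ends e).1 ∈ Y ∧ (ends e).2 ∈ X))

/-- `A` and `B` cross. -/
def crosses [Fintype V] [DecidableEq V] (A B : Finset V) : Prop :=
  (A \ B).Nonempty ∧ (A ∩ B).Nonempty ∧ (B \ A).Nonempty ∧ ((A ∪ B)ᶜ).Nonempty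

/-- `(p,2)`-flex-connectivity: after removing any at most 2 unsafe edges,
every nonempty proper cut has at least `p` edges. -/
def flexConn [Fintype V] [Fintype E] [DecidableEq V] [DecidableEq E]
    (p : ℕ) (ends : E → V × V) (U : Finset E) : Prop :=
  ∀ F ⊆ U, F.card ≤ 2 → ∀ S : Finset V, S.Nonempty → S ≠ Finset.univ →
    p ≤ (cutOf ends S \ F).card

/-- A `(p,3)`-violated set: its cut has exactly `p+2` edges, at least 3 unsafe. -/
def violatedSet [Fintype E] [DecidableEq V] [DecidableEq E]
    (p : ℕ) (ends : E → V × V) (U : Finset E) (S : Finset V) : Prop :=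
  (cutOf ends S).card = p + 2 ∧ 3 ≤ (cutOf ends S ∩ U).card

instance [Fintype E] [DecidableEq V] [DecidableEq E]
    (p : ℕ) (ends : E → V × V) (U : Finset E) (S : Finset V) :
    Decidable (violatedSet p ends U S) := by unfold violatedSet; infer_instance

/-- `A` amenably crosses `B`. -/
def amenablyCrosses [Fintype V] [Fintype E] [DecidableEq V] [DecidableEq E]
    (ends : E → V × V) (U : Finset E) (A B : Finset V) : Prop :=
  crosses A B ∧
    (btw ends (A ∩ B) (B \ A) ∩ U = ∅ ∨ btw ends (A \ B) (A ∪ B)ᶜ ∩ U = ∅)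

lemma Finset.inter_subset_of_subset_union_of_inter_eq_empty {α : Type*} [DecidableEq α]
    {X Y Z W : Finset α} (h : X ⊆ Y ∪ Z) (hZ : Z ∩ W = ∅) : X ∩ W ⊆ Y := by
  intro x hx
  obtain ⟨hxX, hxW⟩ := mem_inter.1 hx
  rcases mem_union.1 (h hxX) with hxY | hxZ
  · exact hxY
  · simpa [hZ] using mem_inter.2 ⟨hxZ, hxW⟩

section Cut

variable [Fintype E] [DecidableEq V] (ends : E → V × V)

@[simp]
lemma mem_cutOf {S : Finset V} {e : E} :
    e ∈ cutOf ends S ↔ Xor ((ends e).1 ∈ S) ((ends e).2 ∈ S) := by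
  simp [cutOf]

lemma card_cutOf_inter_add_card_cutOf_union_le (A B : Finset V) :
    #(cutOf ends (A ∩ B)) + #(cutOf ends (A ∪ B)) ≤ #(cutOf ends A) + #(cutOf ends B) := by
  simp only [cutOf, card_filter, ← sum_add_distrib]
  refine sum_le_sum fun e _ => ?_
  by_cases h1 : (ends e).1 ∈ A <;> by_cases h2 : (ends e).2 ∈ A <;>
    by_cases h3 : (ends e).1 ∈ B <;> by_cases h4 : (ends e).2 ∈ B <;>
    simp [Xor, h1, h2, h3, h4]

lemma cutOf_subset_cutOf_inter_union_cutOf_sdiff [DecidableEq E] (A B : Finset V) :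
    cutOf ends A ⊆ cutOf ends (A ∩ B) ∪ cutOf ends (A \ B) := by
  intro e
  simp only [mem_union, mem_cutOf, mem_inter, mem_sdiff, Xor]
  tauto

lemma cutOf_subset_cutOf_union_union_cutOf_sdiff [DecidableEq E] (A B : Finset V) :
    cutOf ends B ⊆ cutOf ends (A ∪ B) ∪ cutOf ends (A \ B) := by
  intro e
  simp only [mem_union, mem_cutOf, mem_sdiff, Xor]
  tauto

end Cut

section FlexConn

variable [Fintype V] [Fintype E] [DecidableEq V] [DecidableEq E]
  {p : ℕ} {ends : E → V × V} {U : Finset E}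

lemma flexConn.add_card_le_card_cutOf (hflex : flexConn p ends U) {S : Finset V}
    (hS : S.Nonempty) (hS' : S ≠ univ) {F : Finset E} (hF : F ⊆ cutOf ends S ∩ U)
    (hF2 : #F ≤ 2) : p + #F ≤ #(cutOf ends S) := by
  have h := hflex F (hF.trans inter_subset_right) hF2 S hS hS'
  rw [card_sdiff_of_subset (hF.trans inter_subset_left)] at h
  have := card_le_card (hF.trans inter_subset_left)
  omega

lemma flexConn.cutOf_inter_eq_empty (hflex : flexConn p ends U) {S : Finset V}
    (hS : S.Nonempty) (hS' : S ≠ univ) (hcard : #(cutOf ends S) = p) :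
    cutOf ends S ∩ U = ∅ := by
  refine eq_empty_iff_forall_notMem.2 fun f hf => ?_
  have := hflex.add_card_le_card_cutOf hS hS' (singleton_subset_iff.2 hf) (by simp)
  rw [card_singleton] at this
  omega

lemma flexConn.add_two_le_card_cutOf (hflex : flexConn p ends U) {S : Finset V}
    (hS : S.Nonempty) (hS' : S ≠ univ) (hU : 2 ≤ #(cutOf ends S ∩ U)) :
    p + 2 ≤ #(cutOf ends S) := by
  obtain ⟨F, hF, hF2⟩ := exists_subset_card_eq hU
  simpa [hF2] using hflex.add_card_le_card_cutOf hS hS' hF hF2.le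

end FlexConn

section Crosses

variable [Fintype V] [DecidableEq V] {A B : Finset V}

lemma crosses.sdiff_ne_univ (h : crosses A B) : A \ B ≠ univ := by
  obtain ⟨x, hx⟩ := h.2.2.1
  exact fun hAB => (mem_sdiff.1 hx).2 (mem_sdiff.1 (hAB ▸ mem_univ x)).1

lemma crosses.union_ne_univ (h : crosses A B) : A ∪ B ≠ univ := by
  obtain ⟨x, hx⟩ := h.2.2.2
  exact fun hAB => mem_compl.1 hx (hAB ▸ mem_univ x)

lemma crosses.inter_ne_univ (h : crosses A B) : A ∩ B ≠ univ := fun hAB =>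
  h.union_ne_univ (univ_subset_iff.1 (hAB ▸ inter_subset_union))

lemma crosses.union_nonempty (h : crosses A B) : (A ∪ B).Nonempty :=
  h.2.1.mono inter_subset_union

end Crosses

theorem stmt7_general [Fintype V] [Fintype E] [DecidableEq V] [DecidableEq E]
    (p : ℕ) (ends : E → V × V) (U : Finset E)
    (hflex : flexConn p ends U) (A B : Finset V)
    (hA : violatedSet p ends U A) (hB : violatedSet p ends U B)
    (hcross : crosses A B) (hdiff : (cutOf ends (A \ B)).card = p) :
    (cutOf ends (A ∩ B)).card = p + 2 ∧
    (cutOf ends (A ∪ B)).card = p + 2 ∧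
    cutOf ends (A \ B) ∩ U = ∅ ∧
    cutOf ends A ∩ U ⊆ cutOf ends (A ∩ B) ∧
    cutOf ends B ∩ U ⊆ cutOf ends (A ∪ B) ∧
    violatedSet p ends U (A ∩ B) ∧ violatedSet p ends U (A ∪ B) := by
  have hsafe := hflex.cutOf_inter_eq_empty hcross.1 hcross.sdiff_ne_univ hdiff
  have hsubA := inter_subset_of_subset_union_of_inter_eq_empty
    (cutOf_subset_cutOf_inter_union_cutOf_sdiff ends A B) hsafe
  have hsubB := inter_subset_of_subset_union_of_inter_eq_empty
    (cutOf_subset_cutOf_union_union_cutOf_sdiff ends A B) hsafe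
  have hUi : 3 ≤ #(cutOf ends (A ∩ B) ∩ U) :=
    hA.2.trans (card_le_card (subset_inter hsubA inter_subset_right))
  have hUu : 3 ≤ #(cutOf ends (A ∪ B) ∩ U) :=
    hB.2.trans (card_le_card (subset_inter hsubB inter_subset_right))
  have hgei := hflex.add_two_le_card_cutOf hcross.2.1 hcross.inter_ne_univ (by omega)
  have hgeu := hflex.add_two_le_card_cutOf hcross.union_nonempty hcross.union_ne_univ (by omega)
  have hsub := card_cutOf_inter_add_card_cutOf_union_le ends A B
  rw [hA.1, hB.1] at hsub
  have hci : #(cutOf ends (A ∩ B)) = p + 2 := by omega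
  have hcu : #(cutOf ends (A ∪ B)) = p + 2 := by omega
  exact ⟨hci, hcu, hsafe, hsubA, hsubB, ⟨hci, hUi⟩, ⟨hcu, hUu⟩⟩

theorem stmt7 [Fintype V] [Fintype E] [DecidableEq V] [DecidableEq E]
    (p : ℕ) (hp : 2 ≤ p) (heven : Even p) (ends : E → V × V) (U : Finset E)
    (hflex : flexConn p ends U) (A B : Finset V)
    (hA : violatedSet p ends U A) (hB : violatedSet p ends U B)
    (hcross : crosses A B) (hdiff : (cutOf ends (A \ B)).card = p) :
    (cutOf ends (A ∩ B)).card = p + 2 ∧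
    (cutOf ends (A ∪ B)).card = p + 2 ∧
    cutOf ends (A \ B) ∩ U = ∅ ∧
    cutOf ends A ∩ U ⊆ cutOf ends (A ∩ B) ∧
    cutOf ends B ∩ U ⊆ cutOf ends (A ∪ B) ∧
    violatedSet p ends U (A ∩ B) ∧ violatedSet p ends U (A ∪ B) :=
  stmt7_general p ends U hflex A B hA hB hcross hdiff
end

section
/- Let p ≥ 2 be even and let G=(V,E) be a (p,2)-flex-connected graph with unsafe edge set U. Then the family of (p,3)-violated sets is pliable: for any two crossing (p,3)-violated sets A and B, at least two of the four sets A∪B, A∩B, A\B, B\A are (p,3)-violated. -/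
open Finset

variable {V E : Type}

/-!
Call `A ∪ B, A ∩ B` and `A \ B, B \ A` the two opposite pairs of corners; the second pair is the
first one for `A` and `Bᶜ`, up to complementing `A ∪ Bᶜ`. Counting edges between corners, the cuts
of an opposite pair have total size `|δA| + |δB| = 2p + 4` minus twice the number of edges joining
the other two corners, while two adjacent corners partition `A`, `B` or a complement, so their cuts
together carry the at least 3 unsafe edges of `δA` or `δB`. Flex-connectivity makes a cut with `u`
unsafe edges have size at least `p + min u 2`. For even `p` these constraints force two of the four
corners to be violated: parity rules out cuts of size `p + 1`, a cut of size `p` has no unsafe edge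
and so forces both of its neighbours to be violated, and if all four cuts have size `p + 2` then
each opposite pair carries at least 6 unsafe edges.
-/

theorem le_one_of_add_min_two_le {p s u : ℕ} (h : p + min u 2 ≤ s) (hs : s ≤ p + 1) :
    u ≤ 1 := by
  omega

theorem eq_zero_or_add_two_le_of_add_min_two_le {p s u : ℕ} (h : p + min u 2 ≤ s)
    (hs : s % 2 = p % 2) : u = 0 ∨ p + 2 ≤ s := by
  omega

theorem two_le_count_of_corner_bounds {p a b c d ua ub uc ud k l : ℕ} (hp : Even p)
    (ha : p + min ua 2 ≤ a) (hb : p + min ub 2 ≤ b) (hc : p + min uc 2 ≤ c)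
    (hd : p + min ud 2 ≤ d)
    (hab : b + a + 2 * k = 2 * p + 4) (huab : 6 ≤ ub + ua + 2 * k)
    (hcd : c + d + 2 * l = 2 * p + 4) (hucd : 6 ≤ uc + ud + 2 * l)
    (hbc : b + c ≡ p [MOD 2])
    (hubc : 3 ≤ ub + uc) (hubd : 3 ≤ ub + ud) (huac : 3 ≤ ua + uc) (huad : 3 ≤ ua + ud) :
    2 ≤ ((if a = p + 2 ∧ 3 ≤ ua then 1 else 0) + (if b = p + 2 ∧ 3 ≤ ub then 1 else 0) +
      (if c = p + 2 ∧ 3 ≤ uc then 1 else 0) +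
      (if d = p + 2 ∧ 3 ≤ ud then 1 else 0) : ℕ) := by
  have hp2 : p % 2 = 0 := Nat.even_iff.mp hp
  unfold Nat.ModEq at hbc
  -- an odd excess would put a cut of size `p + 1`, with at most one unsafe edge, in both pairs
  have heven : a % 2 = p % 2 ∧ b % 2 = p % 2 ∧ c % 2 = p % 2 ∧ d % 2 = p % 2 := by
    by_contra hodd
    have hab' : ua ≤ 1 ∨ ub ≤ 1 := (show a ≤ p + 1 ∨ b ≤ p + 1 by omega).imp
      (le_one_of_add_min_two_le ha) (le_one_of_add_min_two_le hb)
    have hcd' : uc ≤ 1 ∨ ud ≤ 1 := (show c ≤ p + 1 ∨ d ≤ p + 1 by omega).imp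
      (le_one_of_add_min_two_le hc) (le_one_of_add_min_two_le hd)
    clear ha hb hc hd
    omega
  obtain ⟨ea, eb, ec, ed⟩ := heven
  have ha' := eq_zero_or_add_two_le_of_add_min_two_le ha ea
  have hb' := eq_zero_or_add_two_le_of_add_min_two_le hb eb
  have hc' := eq_zero_or_add_two_le_of_add_min_two_le hc ec
  have hd' := eq_zero_or_add_two_le_of_add_min_two_le hd ed
  clear ha hb hc hd hbc ea eb ec ed hp hp2
  -- a corner without unsafe edges makes both of its neighbours violated; otherwise all four
  -- cuts have size `p + 2` and `k = l = 0`
  split_ifs <;> omega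

section Cuts

variable [Fintype E] [DecidableEq V] (ends : E → V × V)

theorem cutOf_compl [Fintype V] (S : Finset V) : cutOf ends Sᶜ = cutOf ends S := by
  ext e
  simp only [cutOf, mem_filter, mem_univ, true_and, mem_compl, xor_not_not]

variable [DecidableEq E] (F : Finset E)

theorem card_cutOf_inter_add_card_cutOf_union (A B : Finset V) :
    #(cutOf ends (A ∩ B) ∩ F) + #(cutOf ends (A ∪ B) ∩ F) +
        2 * #(_root_.btw ends (A \ B) (B \ A) ∩ F) =
      #(cutOf ends A ∩ F) + #(cutOf ends B ∩ F) := by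
  simp only [cutOf, _root_.btw, filter_inter, univ_inter, card_filter, ← sum_add_distrib, mul_sum]
  refine sum_congr rfl fun e _ => ?_
  by_cases h1 : (ends e).1 ∈ A <;> by_cases h2 : (ends e).1 ∈ B <;>
    by_cases h3 : (ends e).2 ∈ A <;> by_cases h4 : (ends e).2 ∈ B <;> simp [h1, h2, h3, h4]

theorem card_cutOf_inter_add_card_cutOf_sdiff (A B : Finset V) :
    #(cutOf ends (A ∩ B) ∩ F) + #(cutOf ends (A \ B) ∩ F) =
      #(cutOf ends A ∩ F) + 2 * #(_root_.btw ends (A ∩ B) (A \ B) ∩ F) := by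
  simp only [cutOf, _root_.btw, filter_inter, univ_inter, card_filter, ← sum_add_distrib, mul_sum]
  refine sum_congr rfl fun e _ => ?_
  by_cases h1 : (ends e).1 ∈ A <;> by_cases h2 : (ends e).1 ∈ B <;>
    by_cases h3 : (ends e).2 ∈ A <;> by_cases h4 : (ends e).2 ∈ B <;> simp [h1, h2, h3, h4]

end Cuts

theorem crosses.compl_right [Fintype V] [DecidableEq V] {A B : Finset V} (h : crosses A B) :
    crosses A Bᶜ := by
  obtain ⟨hAB, hAiB, hBA, hout⟩ := h
  refine ⟨hAiB.mono ?_, hAB.mono ?_, hout.mono ?_, hBA.mono ?_⟩ <;> intro v <;>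
    simp only [mem_sdiff, mem_inter, mem_compl, mem_union] <;> tauto

theorem flexConn.add_min_two_le_card_cutOf [Fintype V] [Fintype E] [DecidableEq V]
    [DecidableEq E] {p : ℕ} {ends : E → V × V} {U : Finset E} (hflex : flexConn p ends U)
    {S : Finset V} (hS : S.Nonempty) (hSc : Sᶜ.Nonempty) :
    p + min #(cutOf ends S ∩ U) 2 ≤ #(cutOf ends S) := by
  obtain ⟨F, hF, hFcard⟩ := exists_subset_card_eq (min_le_left #(cutOf ends S ∩ U) 2)
  have hSu : S ≠ univ := fun h => by simp [h] at hSc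
  calc p + min #(cutOf ends S ∩ U) 2 = p + #F := by rw [hFcard]
    _ ≤ #(cutOf ends S \ F) + #F := by
      gcongr
      exact hflex F (hF.trans inter_subset_right) (hFcard ▸ min_le_right _ _) S hS hSu
    _ = #(cutOf ends S) := card_sdiff_add_card_eq_card (hF.trans inter_subset_left)

theorem flexConn.add_min_two_le_inter_union [Fintype V] [Fintype E] [DecidableEq V]
    [DecidableEq E] {p : ℕ} {ends : E → V × V} {U : Finset E} (hflex : flexConn p ends U)
    {A B : Finset V} (h : crosses A B) :
    p + min #(cutOf ends (A ∩ B) ∩ U) 2 ≤ #(cutOf ends (A ∩ B)) ∧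
      p + min #(cutOf ends (A ∪ B) ∩ U) 2 ≤ #(cutOf ends (A ∪ B)) := by
  obtain ⟨hAB, hAiB, -, hout⟩ := h
  refine ⟨hflex.add_min_two_le_card_cutOf hAiB (hAB.mono ?_),
    hflex.add_min_two_le_card_cutOf (hAiB.mono inter_subset_union) hout⟩
  intro v
  simp only [mem_sdiff, mem_compl, mem_inter]
  tauto

section Violated

variable [Fintype E] [DecidableEq V] [DecidableEq E] {p : ℕ} {ends : E → V × V} {U : Finset E}

theorem violatedSet.compl [Fintype V] {S : Finset V} (hS : violatedSet p ends U S) :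
    violatedSet p ends U Sᶜ := by
  rwa [violatedSet, cutOf_compl]

theorem violatedSet.exists_inter_union {A B : Finset V} (hA : violatedSet p ends U A)
    (hB : violatedSet p ends U B) :
    ∃ k, #(cutOf ends (A ∩ B)) + #(cutOf ends (A ∪ B)) + 2 * k = 2 * p + 4 ∧
      6 ≤ #(cutOf ends (A ∩ B) ∩ U) + #(cutOf ends (A ∪ B) ∩ U) + 2 * k := by
  have hs := card_cutOf_inter_add_card_cutOf_union ends univ A B
  have hu := card_cutOf_inter_add_card_cutOf_union ends U A B
  have hk : #(_root_.btw ends (A \ B) (B \ A) ∩ U) ≤ #(_root_.btw ends (A \ B) (B \ A)) :=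
    card_le_card inter_subset_left
  simp only [inter_univ] at hs
  obtain ⟨hAs, hAu⟩ := hA
  obtain ⟨hBs, hBu⟩ := hB
  exact ⟨#(_root_.btw ends (A \ B) (B \ A)), by omega, by omega⟩

theorem violatedSet.inter_sdiff {A : Finset V} (hA : violatedSet p ends U A) (B : Finset V) :
    #(cutOf ends (A ∩ B)) + #(cutOf ends (A \ B)) ≡ p [MOD 2] ∧
      3 ≤ #(cutOf ends (A ∩ B) ∩ U) + #(cutOf ends (A \ B) ∩ U) := by
  have hs := card_cutOf_inter_add_card_cutOf_sdiff ends univ A B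
  have hu := card_cutOf_inter_add_card_cutOf_sdiff ends U A B
  simp only [inter_univ] at hs
  obtain ⟨hAs, hAu⟩ := hA
  refine ⟨?_, by omega⟩
  rw [hs, hAs, Nat.ModEq]
  omega

end Violated

theorem stmt9_general [Fintype V] [Fintype E] [DecidableEq V] [DecidableEq E]
    (p : ℕ) (heven : Even p) (ends : E → V × V) (U : Finset E)
    (hflex : flexConn p ends U) (A B : Finset V)
    (hA : violatedSet p ends U A) (hB : violatedSet p ends U B)
    (hcross : crosses A B) :
    2 ≤ ((if violatedSet p ends U (A ∪ B) then 1 else 0) +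
      (if violatedSet p ends U (A ∩ B) then 1 else 0) +
      (if violatedSet p ends U (A \ B) then 1 else 0) +
      (if violatedSet p ends U (B \ A) then 1 else 0) : ℕ) := by
  have hBA : A ∪ Bᶜ = (B \ A)ᶜ := by
    rw [sdiff_eq_inter_compl, compl_inter, compl_compl, union_comm]
  obtain ⟨hb, ha⟩ := hflex.add_min_two_le_inter_union hcross
  obtain ⟨hc, hd⟩ := hflex.add_min_two_le_inter_union hcross.compl_right
  obtain ⟨k, hab, huab⟩ := hA.exists_inter_union hB
  obtain ⟨l, hcd, hucd⟩ := hA.exists_inter_union hB.compl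
  simp only [← sdiff_eq_inter_compl, hBA, cutOf_compl] at hc hd hcd hucd
  obtain ⟨hbc, hubc⟩ := hA.inter_sdiff B
  obtain ⟨-, hubd⟩ := hB.inter_sdiff A
  obtain ⟨-, huac⟩ := hB.compl.inter_sdiff Aᶜ
  obtain ⟨-, huad⟩ := hA.compl.inter_sdiff Bᶜ
  rw [inter_comm B A] at hubd
  simp only [← compl_union, compl_sdiff_compl, cutOf_compl, union_comm B A] at huac huad
  simpa only [violatedSet] using two_le_count_of_corner_bounds heven ha hb hc hd hab huab hcd hucd
    hbc hubc hubd huac huad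

theorem stmt9 [Fintype V] [Fintype E] [DecidableEq V] [DecidableEq E]
    (p : ℕ) (hp : 2 ≤ p) (heven : Even p) (ends : E → V × V) (U : Finset E)
    (hflex : flexConn p ends U) (A B : Finset V)
    (hA : violatedSet p ends U A) (hB : violatedSet p ends U B)
    (hcross : crosses A B) :
    2 ≤ ((if violatedSet p ends U (A ∪ B) then 1 else 0) +
      (if violatedSet p ends U (A ∩ B) then 1 else 0) +
      (if violatedSet p ends U (A \ B) then 1 else 0) +
      (if violatedSet p ends U (B \ A) then 1 else 0) : ℕ) :=
  stmt9_general p heven ends U hflex A B hA hB hcross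
end
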